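/- Let E be a real normed vector space, N a positive integer, ξ̂ : {1, …, N} → E sample points, λ ≥ 0, and ℓ : E → ℝ a measurable function. For each i define φᵢ = sup_{u ∈ E} ( ℓ(u) − λ‖u − ξ̂ᵢ‖ ), and assume each of these suprema is finite. Let π be a probability measure on E × E whose first marginal is the empirical distribution P̂_N = (1/N) Σᵢ δ_{ξ̂ᵢ}, and assume the functions (u, v) ↦ ℓ(v) and (u, v) ↦ ‖u − v‖ are π-integrable. Then ∫ ℓ(v) dπ(u, v) ≤ λ ∫ ‖u − v‖ dπ(u, v) + (1/N) Σᵢ φᵢ. In particular, if P is the second marginal of π and ∫ ‖u − v‖ dπ ≤ ε, then E_P[ℓ] ≤ λε + (1/N) Σᵢ φᵢ. -/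
import Mathlib


open MeasureTheory
open scoped ENNReal

/-- Weak duality for the Wasserstein DRO reformulation: for any coupling `pl`
whose first marginal is the empirical distribution `P̂_N = (1/N) Σᵢ δ_{ξ̂ᵢ}`,
and any `λ ≥ 0`, the expectation of the loss under the second coordinate is
bounded by `λ ∫‖u − v‖ dπ + (1/N) Σᵢ sup_u (ℓ(u) − λ‖u − ξ̂ᵢ‖)`. In
particular, if the second marginal is `P` and the transport cost of `pl` is at
most `ε`, then `E_P[ℓ] ≤ λ ε + (1/N) Σᵢ φᵢ`. -/
theorem wasserstein_dro_weak_duality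
    {E : Type*} [NormedAddCommGroup E] [NormedSpace ℝ E]
    [MeasurableSpace E] [BorelSpace E]
    (N : ℕ) (hN : 0 < N) (ξhat : Fin N → E)
    (lam : ℝ) (hlam : 0 ≤ lam)
    (ℓ : E → ℝ) (hℓ : Measurable ℓ)
    (φ : Fin N → ℝ)
    (hφ : ∀ i, IsLUB (Set.range fun u => ℓ u - lam * ‖u - ξhat i‖) (φ i))
    (pl : Measure (E × E)) [IsProbabilityMeasure pl]
    (hfst : pl.map Prod.fst = (N : ℝ≥0∞)⁻¹ • ∑ i : Fin N, Measure.dirac (ξhat i))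
    (hint_ℓ : Integrable (fun p : E × E => ℓ p.2) pl)
    (hint_cost : Integrable (fun p : E × E => ‖p.1 - p.2‖) pl) :
    (∫ p : E × E, ℓ p.2 ∂pl ≤
        lam * ∫ p : E × E, ‖p.1 - p.2‖ ∂pl + (1 / (N : ℝ)) * ∑ i, φ i) ∧
    (∀ (P : Measure E) (ε : ℝ), pl.map Prod.snd = P →
      (∫ p : E × E, ‖p.1 - p.2‖ ∂pl) ≤ ε →
      ∫ v, ℓ v ∂P ≤ lam * ε + (1 / (N : ℝ)) * ∑ i, φ i) := by
  classical
  -- φ depends only on the point ξhat i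
  have hφeq : ∀ i j : Fin N, ξhat i = ξhat j → φ i = φ j := by
    intro i j hij
    exact (hφ i).unique (by rw [hij] at *; exact hφ j)
  set c : E → ℝ := fun u0 => if h : ∃ i, ξhat i = u0 then φ h.choose else 0 with hc
  have hcξ : ∀ i, c (ξhat i) = φ i := by
    intro i
    have h : ∃ j, ξhat j = ξhat i := ⟨i, rfl⟩
    simp only [hc, dif_pos h]
    exact hφeq _ _ h.choose_spec
  set T : Finset E := Finset.image ξhat Finset.univ with hT
  set g : E → ℝ := fun u => ∑ u0 ∈ T, Set.indicator {u0} (fun _ => c u0) u with hg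
  have hgmeas : Measurable g := by
    apply Finset.measurable_sum
    intro u0 _
    exact (measurable_const).indicator (measurableSet_singleton u0)
  have hgξ : ∀ i, g (ξhat i) = φ i := by
    intro i
    have : ∑ u0 ∈ T, Set.indicator {u0} (fun _ => c u0) (ξhat i) = c (ξhat i) := by
      rw [Finset.sum_eq_single (ξhat i)]
      · simp
      · intro b _ hb
        simp [Set.indicator_of_notMem, hb.symm]
      · intro hmem
        exact absurd (Finset.mem_image.mpr ⟨i, Finset.mem_univ i, rfl⟩) hmem
    show ∑ u0 ∈ T, Set.indicator {u0} (fun _ => c u0) (ξhat i) = φ i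
    rw [this, hcξ]
  -- a.e. p.1 is one of the sample points
  set S : Set E := Set.range ξhat with hS
  have hSmeas : MeasurableSet S := (Set.finite_range ξhat).measurableSet
  have hae_mem : ∀ᵐ p ∂pl, p.1 ∈ S := by
    rw [ae_iff]
    have : {p : E × E | ¬ p.1 ∈ S} = Prod.fst ⁻¹' Sᶜ := rfl
    rw [this, ← Measure.map_apply measurable_fst hSmeas.compl, hfst]
    simp only [Measure.smul_apply, Measure.coe_finset_sum, Finset.sum_apply,
      smul_eq_mul]
    have : ∀ i : Fin N, Measure.dirac (ξhat i) Sᶜ = 0 := by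
      intro i
      rw [Measure.dirac_apply' _ hSmeas.compl]
      simp [hS]
    simp [this]
  -- pointwise a.e. bound
  have hae : ∀ᵐ p ∂pl, ℓ p.2 ≤ lam * ‖p.1 - p.2‖ + g p.1 := by
    filter_upwards [hae_mem] with p hp
    obtain ⟨i, hi⟩ := hp
    have hub : ℓ p.2 - lam * ‖p.2 - ξhat i‖ ≤ φ i :=
      (hφ i).1 ⟨p.2, rfl⟩
    have : ‖p.2 - ξhat i‖ = ‖p.1 - p.2‖ := by
      rw [← hi, norm_sub_rev]
    rw [this] at hub
    have hgp : g p.1 = φ i := by rw [← hi, hgξ]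
    rw [hgp]
    linarith
  -- integrability of g ∘ fst
  have hgbd : ∀ u : E, ‖g u‖ ≤ ∑ u0 ∈ T, ‖c u0‖ := by
    intro u
    refine (norm_sum_le _ _).trans (Finset.sum_le_sum ?_)
    intro u0 _
    by_cases h : u ∈ ({u0} : Set E)
    · rw [Set.indicator_of_mem h]
    · rw [Set.indicator_of_notMem h]; simp
  have hint_g : Integrable (fun p : E × E => g p.1) pl := by
    refine (integrable_const (∑ u0 ∈ T, ‖c u0‖)).mono'
      ((hgmeas.comp measurable_fst).aestronglyMeasurable) ?_
    exact Filter.Eventually.of_forall fun p => hgbd p.1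
  have hint_rhs : Integrable (fun p : E × E => lam * ‖p.1 - p.2‖ + g p.1) pl :=
    (hint_cost.const_mul lam).add hint_g
  -- the main integral inequality
  have hmain : ∫ p : E × E, ℓ p.2 ∂pl ≤
      lam * ∫ p : E × E, ‖p.1 - p.2‖ ∂pl + ∫ p : E × E, g p.1 ∂pl := by
    calc ∫ p : E × E, ℓ p.2 ∂pl
        ≤ ∫ p : E × E, (lam * ‖p.1 - p.2‖ + g p.1) ∂pl :=
          integral_mono_ae hint_ℓ hint_rhs hae
      _ = lam * ∫ p : E × E, ‖p.1 - p.2‖ ∂pl + ∫ p : E × E, g p.1 ∂pl := by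
          rw [integral_add (hint_cost.const_mul lam) hint_g, integral_const_mul]
  -- compute ∫ g ∘ fst
  have hgint : ∫ p : E × E, g p.1 ∂pl = (1 / (N : ℝ)) * ∑ i, φ i := by
    rw [← integral_map measurable_fst.aemeasurable
      (hgmeas.aestronglyMeasurable), hfst, integral_smul_measure,
      integral_finset_sum_measure (fun i _ => (integrable_const (∑ u0 ∈ T, ‖c u0‖)).mono' hgmeas.aestronglyMeasurable (Filter.Eventually.of_forall hgbd))]
    simp only [integral_dirac' g _ hgmeas.stronglyMeasurable, hgξ]
    rw [ENNReal.toReal_inv]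
    simp [smul_eq_mul, one_div]
  have h1 : ∫ p : E × E, ℓ p.2 ∂pl ≤
      lam * ∫ p : E × E, ‖p.1 - p.2‖ ∂pl + (1 / (N : ℝ)) * ∑ i, φ i := by
    rw [← hgint]; exact hmain
  refine ⟨h1, ?_⟩
  intro P ε hsnd hcost
  have hP : ∫ v, ℓ v ∂P = ∫ p : E × E, ℓ p.2 ∂pl := by
    rw [← hsnd, integral_map measurable_snd.aemeasurable hℓ.aestronglyMeasurable]
  rw [hP]
  refine h1.trans ?_
  have : lam * ∫ p : E × E, ‖p.1 - p.2‖ ∂pl ≤ lam * ε :=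
    mul_le_mul_of_nonneg_left hcost hlam
  linarith
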